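/- Let λ₁, λ₂, λ₃ > 0 with λ₁ + λ₂ + λ₃ = 1, take F₁ = F₂ = F₃ = 0, and define σ_i, w_i as above. Then for each i = 1,2,3: w_i > 0 and σ_i + w_i > 0. Explicitly, w₁ = (1/3)(3λ₁ − 2λ₁λ₂/(λ₁+λ₂) − 2λ₁λ₃/(λ₁+λ₃) + 4λ₂λ₃/(λ₂+λ₃)) > 0 and σ₁ + w₁ = (2/3)(3λ₁ − 2λ₁λ₂/(λ₁+λ₂) − 2λ₁λ₃/(λ₁+λ₃) + 2λ₂λ₃/(λ₂+λ₃)) > 0, with the analogous formulas and inequalities holding for i = 2, 3 under permutation of the indices. -/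
import Mathlib


set_option maxHeartbeats 2000000
noncomputable section

/-- `q(x,y;F_x,F_y) = (x − F_x²/x)(y − F_y²/y)`. -/
def qfun (x y Fx Fy : ℝ) : ℝ := (x - Fx ^ 2 / x) * (y - Fy ^ 2 / y)

/-- `r(x,y;F_x,F_y) = −(1 − F_x²/x − F_y²/y)`. -/
def rfun (x y Fx Fy : ℝ) : ℝ := -(1 - Fx ^ 2 / x - Fy ^ 2 / y)

/-- `g(x,y;F_x,F_y) = 2 q (x + y − 1 − r) / (3(x+y)²)`. -/
def gfun (x y Fx Fy : ℝ) : ℝ :=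
  2 * qfun x y Fx Fy * (x + y - 1 - rfun x y Fx Fy) / (3 * (x + y) ^ 2)

/-- `σ₁ = λ₁ − g(λ₁,λ₂;F₁,F₂) − g(λ₁,λ₃;F₁,F₃)`. -/
def sig1 (l1 l2 l3 F1 F2 F3 : ℝ) : ℝ := l1 - gfun l1 l2 F1 F2 - gfun l1 l3 F1 F3

/-- `σ₂ = λ₂ − g(λ₂,λ₁;F₂,F₁) − g(λ₂,λ₃;F₂,F₃)`. -/
def sig2 (l1 l2 l3 F1 F2 F3 : ℝ) : ℝ := l2 - gfun l2 l1 F2 F1 - gfun l2 l3 F2 F3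

/-- `σ₃ = λ₃ − g(λ₃,λ₁;F₃,F₁) − g(λ₃,λ₂;F₃,F₂)`. -/
def sig3 (l1 l2 l3 F1 F2 F3 : ℝ) : ℝ := l3 - gfun l3 l1 F3 F1 - gfun l3 l2 F3 F2

/-- `w₁ = σ₁ + 2g(λ₂,λ₃;F₂,F₃)`. -/
def w1 (l1 l2 l3 F1 F2 F3 : ℝ) : ℝ := sig1 l1 l2 l3 F1 F2 F3 + 2 * gfun l2 l3 F2 F3

/-- `w₂ = σ₂ + 2g(λ₁,λ₃;F₁,F₃)`. -/
def w2 (l1 l2 l3 F1 F2 F3 : ℝ) : ℝ := sig2 l1 l2 l3 F1 F2 F3 + 2 * gfun l1 l3 F1 F3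

/-- `w₃ = σ₃ + 2g(λ₁,λ₂;F₁,F₂)`. -/
def w3 (l1 l2 l3 F1 F2 F3 : ℝ) : ℝ := sig3 l1 l2 l3 F1 F2 F3 + 2 * gfun l1 l2 F1 F2

lemma key2 (a b c : ℝ) (ha : 0 < a) (hb : 0 < b) (hc : 0 < c) :
    0 < 3 * a - 2 * a * b / (a + b) - 2 * a * c / (a + c) + 2 * b * c / (b + c) := by
  have hab : (0:ℝ) < a + b := by linarith
  have hac : (0:ℝ) < a + c := by linarith
  have hbc : (0:ℝ) < b + c := by linarith
  have heq : 3 * a - 2 * a * b / (a + b) - 2 * a * c / (a + c) + 2 * b * c / (b + c)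
      = (a * (3*a^2 + a*b + a*c - b*c) * (b + c) + 2*b*c*(a+b)*(a+c))
        / ((a + b) * (a + c) * (b + c)) := by
    field_simp; ring
  rw [heq]
  apply div_pos _ (by positivity)
  nlinarith [sq_nonneg (a*b - a*c), sq_nonneg (a*b + a*c - 2*b*c), mul_pos ha hb,
    mul_pos ha hc, mul_pos hb hc, mul_pos (mul_pos ha hb) hc, sq_nonneg (b - c),
    sq_nonneg (a - b), sq_nonneg (a - c), mul_pos (mul_pos ha ha) hb,
    mul_pos (mul_pos ha ha) hc]

lemma key4 (a b c : ℝ) (ha : 0 < a) (hb : 0 < b) (hc : 0 < c) :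
    0 < 3 * a - 2 * a * b / (a + b) - 2 * a * c / (a + c) + 4 * b * c / (b + c) := by
  have h := key2 a b c ha hb hc
  have h2 : 0 < 2 * b * c / (b + c) := by positivity
  have : 4 * b * c / (b + c) = 2 * b * c / (b + c) + 2 * b * c / (b + c) := by ring
  linarith [this ▸ le_refl (4 * b * c / (b + c))]

/-- Lemma 4.3: for vanishing first-order moments, `w_i > 0` and `σ_i + w_i > 0`
for each `i`, with the explicit formulas
`w₁ = (1/3)(3λ₁ − 2λ₁λ₂/(λ₁+λ₂) − 2λ₁λ₃/(λ₁+λ₃) + 4λ₂λ₃/(λ₂+λ₃))` and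
`σ₁ + w₁ = (2/3)(3λ₁ − 2λ₁λ₂/(λ₁+λ₂) − 2λ₁λ₃/(λ₁+λ₃) + 2λ₂λ₃/(λ₂+λ₃))`,
and their analogues under permutation of the indices. -/
theorem w_pos_and_sig_add_w_pos_zero_flux (l1 l2 l3 : ℝ)
    (h1 : 0 < l1) (h2 : 0 < l2) (h3 : 0 < l3) (hsum : l1 + l2 + l3 = 1) :
    (0 < w1 l1 l2 l3 0 0 0 ∧ 0 < w2 l1 l2 l3 0 0 0 ∧ 0 < w3 l1 l2 l3 0 0 0) ∧
    (0 < sig1 l1 l2 l3 0 0 0 + w1 l1 l2 l3 0 0 0 ∧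
     0 < sig2 l1 l2 l3 0 0 0 + w2 l1 l2 l3 0 0 0 ∧
     0 < sig3 l1 l2 l3 0 0 0 + w3 l1 l2 l3 0 0 0) ∧
    (w1 l1 l2 l3 0 0 0
        = (1 / 3) * (3 * l1 - 2 * l1 * l2 / (l1 + l2) - 2 * l1 * l3 / (l1 + l3)
            + 4 * l2 * l3 / (l2 + l3)) ∧
     w2 l1 l2 l3 0 0 0
        = (1 / 3) * (3 * l2 - 2 * l2 * l1 / (l2 + l1) - 2 * l2 * l3 / (l2 + l3)
            + 4 * l1 * l3 / (l1 + l3)) ∧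
     w3 l1 l2 l3 0 0 0
        = (1 / 3) * (3 * l3 - 2 * l3 * l1 / (l3 + l1) - 2 * l3 * l2 / (l3 + l2)
            + 4 * l1 * l2 / (l1 + l2))) ∧
    (sig1 l1 l2 l3 0 0 0 + w1 l1 l2 l3 0 0 0
        = (2 / 3) * (3 * l1 - 2 * l1 * l2 / (l1 + l2) - 2 * l1 * l3 / (l1 + l3)
            + 2 * l2 * l3 / (l2 + l3)) ∧
     sig2 l1 l2 l3 0 0 0 + w2 l1 l2 l3 0 0 0
        = (2 / 3) * (3 * l2 - 2 * l2 * l1 / (l2 + l1) - 2 * l2 * l3 / (l2 + l3)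
            + 2 * l1 * l3 / (l1 + l3)) ∧
     sig3 l1 l2 l3 0 0 0 + w3 l1 l2 l3 0 0 0
        = (2 / 3) * (3 * l3 - 2 * l3 * l1 / (l3 + l1) - 2 * l3 * l2 / (l3 + l2)
            + 2 * l1 * l2 / (l1 + l2))) := by
  have hab : (0:ℝ) < l1 + l2 := by linarith
  have hac : (0:ℝ) < l1 + l3 := by linarith
  have hbc : (0:ℝ) < l2 + l3 := by linarith
  have e1 : w1 l1 l2 l3 0 0 0
      = (1 / 3) * (3 * l1 - 2 * l1 * l2 / (l1 + l2) - 2 * l1 * l3 / (l1 + l3)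
          + 4 * l2 * l3 / (l2 + l3)) := by
    simp only [w1, sig1, gfun, qfun, rfun]
    field_simp
    ring
  have e2 : w2 l1 l2 l3 0 0 0
      = (1 / 3) * (3 * l2 - 2 * l2 * l1 / (l2 + l1) - 2 * l2 * l3 / (l2 + l3)
          + 4 * l1 * l3 / (l1 + l3)) := by
    simp only [w2, sig2, gfun, qfun, rfun]
    field_simp
    ring
  have e3 : w3 l1 l2 l3 0 0 0
      = (1 / 3) * (3 * l3 - 2 * l3 * l1 / (l3 + l1) - 2 * l3 * l2 / (l3 + l2)
          + 4 * l1 * l2 / (l1 + l2)) := by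
    simp only [w3, sig3, gfun, qfun, rfun]
    field_simp
    ring
  have f1 : sig1 l1 l2 l3 0 0 0 + w1 l1 l2 l3 0 0 0
      = (2 / 3) * (3 * l1 - 2 * l1 * l2 / (l1 + l2) - 2 * l1 * l3 / (l1 + l3)
          + 2 * l2 * l3 / (l2 + l3)) := by
    simp only [w1, sig1, gfun, qfun, rfun]
    field_simp
    ring
  have f2 : sig2 l1 l2 l3 0 0 0 + w2 l1 l2 l3 0 0 0
      = (2 / 3) * (3 * l2 - 2 * l2 * l1 / (l2 + l1) - 2 * l2 * l3 / (l2 + l3)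
          + 2 * l1 * l3 / (l1 + l3)) := by
    simp only [w2, sig2, gfun, qfun, rfun]
    field_simp
    ring
  have f3 : sig3 l1 l2 l3 0 0 0 + w3 l1 l2 l3 0 0 0
      = (2 / 3) * (3 * l3 - 2 * l3 * l1 / (l3 + l1) - 2 * l3 * l2 / (l3 + l2)
          + 2 * l1 * l2 / (l1 + l2)) := by
    simp only [w3, sig3, gfun, qfun, rfun]
    field_simp
    ring
  have k41 := key4 l1 l2 l3 h1 h2 h3
  have k42 := key4 l2 l1 l3 h2 h1 h3
  have k43 := key4 l3 l1 l2 h3 h1 h2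
  have k21 := key2 l1 l2 l3 h1 h2 h3
  have k22 := key2 l2 l1 l3 h2 h1 h3
  have k23 := key2 l3 l1 l2 h3 h1 h2
  refine ⟨⟨?_, ?_, ?_⟩, ⟨?_, ?_, ?_⟩, ⟨e1, e2, e3⟩, ⟨f1, f2, f3⟩⟩
  · rw [e1]; linarith
  · rw [e2]; linarith
  · rw [e3]; linarith
  · rw [f1]; linarith
  · rw [f2]; linarith
  · rw [f3]; linarith


end
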